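/- Assume G is an elementary abelian 2-group with n = |G| > 4. Let L be an F-linear combination of the six matrices E_4*A_1E_2*A_3E_4*, E_4*A_1E_3*A_2E_4*, E_4*A_2E_1*A_3E_4*, E_4*A_2E_3*A_1E_4*, E_4*A_3E_1*A_2E_4*, E_4*A_3E_2*A_1E_4* whose coefficients are not all zero. If L lies in T₀ (the F-linear span of {E_a*A_bE_c* : a,b,c ∈ {0,…,4}}), then L = c·E_4*A_4E_4* for some nonzero c ∈ F. -/

import Mathlib

open Matrix

abbrev XG (G : Type) [Group G] : Type := {v : Fin 3 → G // v 0 * v 1 = v 2}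

def cIdx : Fin 5 → Fin 3
  | 0 => 0
  | 1 => 0
  | 2 => 1
  | 3 => 2
  | 4 => 0

def rel {G : Type} [Group G] (i : Fin 5) (y z : XG G) : Prop :=
  if i = 0 then y = z
  else if i = 4 then ∀ d : Fin 3, y.1 d ≠ z.1 d
  else y ≠ z ∧ y.1 (cIdx i) = z.1 (cIdx i)

instance {G : Type} [Group G] [DecidableEq G] (i : Fin 5) (y z : XG G) :
    Decidable (rel i y z) := by
  unfold rel
  infer_instance

def Adj (F : Type) [Field F] {G : Type} [Group G] [DecidableEq G] (i : Fin 5) :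
    Matrix (XG G) (XG G) F :=
  Matrix.of fun y z => if rel i y z then 1 else 0

def DualE (F : Type) [Field F] {G : Type} [Group G] [DecidableEq G] (x : XG G) (i : Fin 5) :
    Matrix (XG G) (XG G) F :=
  Matrix.of fun y z => if y = z ∧ rel i x y then 1 else 0

def AllOne (F : Type) [Field F] (G : Type) [Group G] : Matrix (XG G) (XG G) F :=
  Matrix.of fun _ _ => 1

def genSet (F : Type) [Field F] (G : Type) [Group G] [Fintype G] [DecidableEq G]
    (x : XG G) : Set (Matrix (XG G) (XG G) F) :=
  {M | ∃ a b c : Fin 5, M = DualE F x a * Adj F b * DualE F x c}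

def TerwilligerAlg (F : Type) [Field F] (G : Type) [Group G] [Fintype G] [DecidableEq G]
    (x : XG G) : Subalgebra F (Matrix (XG G) (XG G) F) :=
  Algebra.adjoin F (genSet F G x)

section Aux

variable {F : Type} [Field F] {G : Type} [Group G] [Fintype G] [DecidableEq G]

lemma XG.ext' {y z : XG G} (h0 : y.1 0 = z.1 0) (h1 : y.1 1 = z.1 1) : y = z := by
  have h2 : y.1 2 = z.1 2 := by rw [← y.2, ← z.2, h0, h1]
  apply Subtype.ext
  funext d
  fin_cases d <;> assumption

def mkX (g h : G) : XG G := ⟨![g, h, g * h], by simp⟩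

@[simp] lemma mkX_0 (g h : G) : (mkX g h : XG G).1 0 = g := rfl
@[simp] lemma mkX_1 (g h : G) : (mkX g h : XG G).1 1 = h := rfl
@[simp] lemma mkX_2 (g h : G) : (mkX g h : XG G).1 2 = g * h := rfl

lemma rel0_iff (y z : XG G) : rel 0 y z ↔ y = z := by simp [rel]
lemma rel1_iff (y z : XG G) : rel 1 y z ↔ y ≠ z ∧ y.1 0 = z.1 0 := by
  simp [rel, cIdx]
lemma rel2_iff (y z : XG G) : rel 2 y z ↔ y ≠ z ∧ y.1 1 = z.1 1 := by
  simp [rel, cIdx]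
lemma rel3_iff (y z : XG G) : rel 3 y z ↔ y ≠ z ∧ y.1 2 = z.1 2 := by
  simp [rel, cIdx]
lemma rel4_iff (y z : XG G) : rel 4 y z ↔ ∀ d : Fin 3, y.1 d ≠ z.1 d := by
  simp [rel]

end Aux
section Aux2

set_option linter.unusedSectionVars false

variable {F : Type} [Field F] {G : Type} [Group G] [Fintype G] [DecidableEq G]

lemma mul_dualE_apply (M : Matrix (XG G) (XG G) F) (x : XG G) (a : Fin 5) (y z : XG G) :
    (M * DualE F x a) y z = if rel a x z then M y z else 0 := by
  rw [Matrix.mul_apply]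
  rw [Finset.sum_eq_single z]
  · simp [DualE, and_comm]
  · intro w _ hw
    simp [DualE, hw]
  · simp
lemma dualE_mul_apply (M : Matrix (XG G) (XG G) F) (x : XG G) (a : Fin 5) (y z : XG G) :
    (DualE F x a * M) y z = if rel a x y then M y z else 0 := by
  rw [Matrix.mul_apply]
  rw [Finset.sum_eq_single y]
  · simp [DualE]
  · intro w _ hw
    simp [DualE, Ne.symm hw]
  · simp

lemma term_apply (x : XG G) (i j k : Fin 5) (y z : XG G) :
    (DualE F x 4 * Adj F i * DualE F x j * Adj F k * DualE F x 4 :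
        Matrix (XG G) (XG G) F) y z =
      if rel 4 x y ∧ rel 4 x z then
        (∑ w : XG G, if rel i y w ∧ rel j x w ∧ rel k w z then (1 : F) else 0)
      else 0 := by
  rw [mul_dualE_apply, Matrix.mul_apply]
  by_cases h4y : rel 4 x y <;> by_cases h4z : rel 4 x z <;>
    simp only [h4y, h4z, if_true, if_false, true_and, false_and, and_true, and_false]
  · apply Finset.sum_congr rfl
    intro w _
    rw [mul_dualE_apply, dualE_mul_apply]
    simp only [h4y, if_true, Adj, Matrix.of_apply]
    by_cases h1 : rel i y w <;> by_cases h2 : rel j x w <;> by_cases h3 : rel k w z <;>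
      simp [h1, h2, h3]
  · apply Finset.sum_eq_zero
    intro w _
    rw [mul_dualE_apply, dualE_mul_apply]
    simp [h4y]

lemma triple_apply (x : XG G) (a b c : Fin 5) (y z : XG G) :
    (DualE F x a * Adj F b * DualE F x c : Matrix (XG G) (XG G) F) y z =
      if rel a x y ∧ rel b y z ∧ rel c x z then (1 : F) else 0 := by
  rw [mul_dualE_apply, dualE_mul_apply]
  by_cases h1 : rel a x y <;> by_cases h2 : rel b y z <;> by_cases h3 : rel c x z <;>
    simp [h1, h2, h3, Adj]

end Aux2
section Aux3

set_option linter.unusedSectionVars false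

variable {F : Type} [Field F] {G : Type} [Group G] [Fintype G] [DecidableEq G]

lemma ne_of_coord {y z : XG G} (d : Fin 3) (h : y.1 d ≠ z.1 d) : y ≠ z :=
  fun e => h (by rw [e])

lemma sum_indicator (P : XG G → Prop) [DecidablePred P] (w₀ : XG G) (cond : Prop)
    [Decidable cond] (h : ∀ w, P w ↔ (w = w₀ ∧ cond)) :
    (∑ w : XG G, if P w then (1 : F) else 0) = if cond then 1 else 0 := by
  have key : ∀ w : XG G, (if P w then (1 : F) else 0)
      = if w = w₀ then (if cond then 1 else 0) else 0 := by
    intro w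
    by_cases hw : w = w₀
    · subst hw
      by_cases hc : cond <;> simp [h, hc]
    · simp [hw, h w]
  rw [Finset.sum_congr rfl (fun w _ => key w), Finset.sum_ite_eq' Finset.univ w₀]
  simp

lemma sumM1 (x y z : XG G) (h4y : rel 4 x y) (h4z : rel 4 x z) :
    (∑ w : XG G, if rel 1 y w ∧ rel 2 x w ∧ rel 3 w z then (1 : F) else 0)
      = if y.1 0 * x.1 1 = z.1 2 then 1 else 0 := by
  rw [rel4_iff] at h4y h4z
  apply sum_indicator _ (mkX (y.1 0) (x.1 1))
  intro w
  rw [rel1_iff, rel2_iff, rel3_iff]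
  constructor
  · rintro ⟨⟨hyw, h0⟩, ⟨hxw, h1⟩, hwz, h2⟩
    exact ⟨XG.ext' h0.symm h1.symm, by rw [← h2, ← w.2, ← h0, ← h1]⟩
  · rintro ⟨hw, hc⟩
    subst hw
    refine ⟨⟨ne_of_coord 1 (fun e => h4y 1 (by simpa using e.symm)), rfl⟩,
      ⟨ne_of_coord 0 (fun e => h4y 0 (by simpa using e)), rfl⟩,
      ne_of_coord 1 (fun e => h4z 1 (by simpa using e)), by simpa using hc⟩

lemma sumM2 (x y z : XG G) (h4y : rel 4 x y) (h4z : rel 4 x z) :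
    (∑ w : XG G, if rel 1 y w ∧ rel 3 x w ∧ rel 2 w z then (1 : F) else 0)
      = if y.1 0 * z.1 1 = x.1 2 then 1 else 0 := by
  rw [rel4_iff] at h4y h4z
  apply sum_indicator _ (mkX (y.1 0) (z.1 1))
  intro w
  rw [rel1_iff, rel3_iff, rel2_iff]
  constructor
  · rintro ⟨⟨hyw, h0⟩, ⟨hxw, h2⟩, hwz, h1⟩
    exact ⟨XG.ext' h0.symm h1, by rw [h2, ← w.2, ← h0, h1]⟩
  · rintro ⟨hw, hc⟩
    subst hw
    refine ⟨⟨?_, rfl⟩, ⟨ne_of_coord 0 (fun e => h4y 0 (by simpa using e)),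
      by simpa using hc.symm⟩, ?_, rfl⟩
    · refine ne_of_coord 1 (fun e => ?_)
      simp only [mkX_1] at e
      exact h4y 2 (by rw [← hc, ← e, y.2])
    · refine ne_of_coord 2 (fun e => ?_)
      simp only [mkX_2] at e
      exact h4z 2 (hc.symm.trans e)

lemma sumM3 (x y z : XG G) (h4y : rel 4 x y) (h4z : rel 4 x z) :
    (∑ w : XG G, if rel 2 y w ∧ rel 1 x w ∧ rel 3 w z then (1 : F) else 0)
      = if x.1 0 * y.1 1 = z.1 2 then 1 else 0 := by
  rw [rel4_iff] at h4y h4z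
  apply sum_indicator _ (mkX (x.1 0) (y.1 1))
  intro w
  rw [rel2_iff, rel1_iff, rel3_iff]
  constructor
  · rintro ⟨⟨hyw, h1⟩, ⟨hxw, h0⟩, hwz, h2⟩
    exact ⟨XG.ext' h0.symm h1.symm, by rw [← h2, ← w.2, ← h0, ← h1]⟩
  · rintro ⟨hw, hc⟩
    subst hw
    refine ⟨⟨ne_of_coord 0 (fun e => h4y 0 (by simpa using e.symm)), rfl⟩,
      ⟨ne_of_coord 1 (fun e => h4y 1 (by simpa using e)), rfl⟩,
      ne_of_coord 0 (fun e => h4z 0 (by simpa using e)), by simpa using hc⟩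

lemma sumM4 (x y z : XG G) (h4y : rel 4 x y) (h4z : rel 4 x z) :
    (∑ w : XG G, if rel 2 y w ∧ rel 3 x w ∧ rel 1 w z then (1 : F) else 0)
      = if z.1 0 * y.1 1 = x.1 2 then 1 else 0 := by
  rw [rel4_iff] at h4y h4z
  apply sum_indicator _ (mkX (z.1 0) (y.1 1))
  intro w
  rw [rel2_iff, rel3_iff, rel1_iff]
  constructor
  · rintro ⟨⟨hyw, h1⟩, ⟨hxw, h2⟩, hwz, h0⟩
    exact ⟨XG.ext' h0 h1.symm, by rw [h2, ← w.2, h0, ← h1]⟩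
  · rintro ⟨hw, hc⟩
    subst hw
    refine ⟨⟨?_, rfl⟩, ⟨ne_of_coord 1 (fun e => h4y 1 (by simpa using e)),
      by simpa using hc.symm⟩, ?_, rfl⟩
    · refine ne_of_coord 0 (fun e => ?_)
      simp only [mkX_0] at e
      exact h4y 2 (by rw [← hc, ← e, y.2])
    · refine ne_of_coord 2 (fun e => ?_)
      simp only [mkX_2] at e
      exact h4z 2 (hc.symm.trans e)

lemma sumM5 (x y z : XG G) (h4y : rel 4 x y) (h4z : rel 4 x z) :
    (∑ w : XG G, if rel 3 y w ∧ rel 1 x w ∧ rel 2 w z then (1 : F) else 0)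
      = if x.1 0 * z.1 1 = y.1 2 then 1 else 0 := by
  rw [rel4_iff] at h4y h4z
  apply sum_indicator _ (mkX (x.1 0) (z.1 1))
  intro w
  rw [rel3_iff, rel1_iff, rel2_iff]
  constructor
  · rintro ⟨⟨hyw, h2⟩, ⟨hxw, h0⟩, hwz, h1⟩
    exact ⟨XG.ext' h0.symm h1, by rw [h2, ← w.2, ← h0, h1]⟩
  · rintro ⟨hw, hc⟩
    subst hw
    refine ⟨⟨ne_of_coord 0 (fun e => h4y 0 (by simpa using e.symm)),
      by simpa using hc.symm⟩,
      ⟨ne_of_coord 1 (fun e => h4z 1 (by simpa using e)), rfl⟩,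
      ne_of_coord 0 (fun e => h4z 0 (by simpa using e)), rfl⟩

lemma sumM6 (x y z : XG G) (h4y : rel 4 x y) (h4z : rel 4 x z) :
    (∑ w : XG G, if rel 3 y w ∧ rel 2 x w ∧ rel 1 w z then (1 : F) else 0)
      = if z.1 0 * x.1 1 = y.1 2 then 1 else 0 := by
  rw [rel4_iff] at h4y h4z
  apply sum_indicator _ (mkX (z.1 0) (x.1 1))
  intro w
  rw [rel3_iff, rel2_iff, rel1_iff]
  constructor
  · rintro ⟨⟨hyw, h2⟩, ⟨hxw, h1⟩, hwz, h0⟩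
    exact ⟨XG.ext' h0 h1.symm, by rw [h2, ← w.2, h0, ← h1]⟩
  · rintro ⟨hw, hc⟩
    subst hw
    refine ⟨⟨ne_of_coord 1 (fun e => h4y 1 (by simpa using e.symm)),
      by simpa using hc.symm⟩,
      ⟨ne_of_coord 0 (fun e => h4z 0 (by simpa using e)), rfl⟩,
      ne_of_coord 1 (fun e => h4z 1 (by simpa using e)), rfl⟩

end Aux3
section Aux4

set_option linter.unusedSectionVars false

variable {F : Type} [Field F] {G : Type} [Group G] [Fintype G] [DecidableEq G]

lemma rel_not_of_rel4 {u v : XG G} (h : rel 4 u v) {i : Fin 5} (hi : i ≠ 4) :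
    ¬ rel i u v := by
  rw [rel4_iff] at h
  fin_cases i
  · show ¬ rel 0 u v
    rw [rel0_iff]; exact ne_of_coord 0 (h 0)
  · show ¬ rel 1 u v
    rw [rel1_iff]; rintro ⟨-, e⟩; exact h 0 e
  · show ¬ rel 2 u v
    rw [rel2_iff]; rintro ⟨-, e⟩; exact h 1 e
  · show ¬ rel 3 u v
    rw [rel3_iff]; rintro ⟨-, e⟩; exact h 2 e
  · exact absurd rfl hi

lemma rel_iff_of_rel4 {u v v' : XG G} (h : rel 4 u v) (h' : rel 4 u v') (i : Fin 5) :
    rel i u v ↔ rel i u v' := by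
  by_cases hi : i = 4
  · subst hi; exact iff_of_true h h'
  · exact iff_of_false (rel_not_of_rel4 h hi) (rel_not_of_rel4 h' hi)

lemma span_const (x : XG G) (L : Matrix (XG G) (XG G) F)
    (hmem : L ∈ Submodule.span F (genSet F G x)) (y z y' z' : XG G)
    (h1 : ∀ i, rel i x y ↔ rel i x y') (h2 : ∀ i, rel i y z ↔ rel i y' z')
    (h3 : ∀ i, rel i x z ↔ rel i x z') : L y z = L y' z' := by
  induction hmem using Submodule.span_induction with
  | mem M hM =>
      obtain ⟨a, b, c, rfl⟩ := hM
      rw [triple_apply, triple_apply]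
      simp only [h1 a, h2 b, h3 c]
  | zero => simp
  | add M N _ _ hM hN => simp [Matrix.add_apply, hM, hN]
  | smul a M _ hM => simp [Matrix.smul_apply, hM]

lemma const44 (x : XG G) (L : Matrix (XG G) (XG G) F)
    (hmem : L ∈ Submodule.span F (genSet F G x)) (y z y' z' : XG G)
    (hy : rel 4 x y) (hyz : rel 4 y z) (hz : rel 4 x z)
    (hy' : rel 4 x y') (hyz' : rel 4 y' z') (hz' : rel 4 x z') : L y z = L y' z' := by
  apply span_const x L hmem
  · exact rel_iff_of_rel4 hy hy'
  · intro i
    by_cases hi : i = 4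
    · subst hi; exact iff_of_true hyz hyz'
    · exact iff_of_false (rel_not_of_rel4 hyz hi) (rel_not_of_rel4 hyz' hi)
  · exact rel_iff_of_rel4 hz hz'

lemma rel_cases (u v : XG G) :
    u = v ∨ (u ≠ v ∧ u.1 0 = v.1 0) ∨ (u ≠ v ∧ u.1 1 = v.1 1) ∨
      (u ≠ v ∧ u.1 2 = v.1 2) ∨ (∀ d : Fin 3, u.1 d ≠ v.1 d) := by
  by_cases h : u = v
  · exact Or.inl h
  by_cases h0 : u.1 0 = v.1 0
  · exact Or.inr (Or.inl ⟨h, h0⟩)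
  by_cases h1 : u.1 1 = v.1 1
  · exact Or.inr (Or.inr (Or.inl ⟨h, h1⟩))
  by_cases h2 : u.1 2 = v.1 2
  · exact Or.inr (Or.inr (Or.inr (Or.inl ⟨h, h2⟩)))
  · refine Or.inr (Or.inr (Or.inr (Or.inr fun d => ?_)))
    fin_cases d <;> assumption

end Aux4
section Aux5

set_option linter.unusedSectionVars false

variable {F : Type} [Field F] {G : Type} [Group G] [Fintype G] [DecidableEq G]

lemma myL_apply (x : XG G) (c₁ c₂ c₃ c₄ c₅ c₆ : F) (L : Matrix (XG G) (XG G) F)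
    (hL : L =
      c₁ • (DualE F x 4 * Adj F 1 * DualE F x 2 * Adj F 3 * DualE F x 4) +
      c₂ • (DualE F x 4 * Adj F 1 * DualE F x 3 * Adj F 2 * DualE F x 4) +
      c₃ • (DualE F x 4 * Adj F 2 * DualE F x 1 * Adj F 3 * DualE F x 4) +
      c₄ • (DualE F x 4 * Adj F 2 * DualE F x 3 * Adj F 1 * DualE F x 4) +
      c₅ • (DualE F x 4 * Adj F 3 * DualE F x 1 * Adj F 2 * DualE F x 4) +
      c₆ • (DualE F x 4 * Adj F 3 * DualE F x 2 * Adj F 1 * DualE F x 4))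
    (y z : XG G) (h4y : rel 4 x y) (h4z : rel 4 x z) :
    L y z = c₁ * (if y.1 0 * x.1 1 = z.1 2 then 1 else 0)
      + c₂ * (if y.1 0 * z.1 1 = x.1 2 then 1 else 0)
      + c₃ * (if x.1 0 * y.1 1 = z.1 2 then 1 else 0)
      + c₄ * (if z.1 0 * y.1 1 = x.1 2 then 1 else 0)
      + c₅ * (if x.1 0 * z.1 1 = y.1 2 then 1 else 0)
      + c₆ * (if z.1 0 * x.1 1 = y.1 2 then 1 else 0) := by
  rw [hL]
  simp only [Matrix.add_apply, Matrix.smul_apply, smul_eq_mul, term_apply,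
    h4y, h4z, and_self, if_true]
  rw [sumM1 x y z h4y h4z, sumM2 x y z h4y h4z, sumM3 x y z h4y h4z,
    sumM4 x y z h4y h4z, sumM5 x y z h4y h4z, sumM6 x y z h4y h4z]

lemma myL_zero (x : XG G) (c₁ c₂ c₃ c₄ c₅ c₆ : F) (L : Matrix (XG G) (XG G) F)
    (hL : L =
      c₁ • (DualE F x 4 * Adj F 1 * DualE F x 2 * Adj F 3 * DualE F x 4) +
      c₂ • (DualE F x 4 * Adj F 1 * DualE F x 3 * Adj F 2 * DualE F x 4) +
      c₃ • (DualE F x 4 * Adj F 2 * DualE F x 1 * Adj F 3 * DualE F x 4) +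
      c₄ • (DualE F x 4 * Adj F 2 * DualE F x 3 * Adj F 1 * DualE F x 4) +
      c₅ • (DualE F x 4 * Adj F 3 * DualE F x 1 * Adj F 2 * DualE F x 4) +
      c₆ • (DualE F x 4 * Adj F 3 * DualE F x 2 * Adj F 1 * DualE F x 4))
    (y z : XG G) (h : ¬ (rel 4 x y ∧ rel 4 x z)) : L y z = 0 := by
  rw [hL]
  simp only [Matrix.add_apply, Matrix.smul_apply, smul_eq_mul, term_apply, h, if_false]
  ring



lemma myMulEqOne (hsq : ∀ a : G, a * a = 1) (a b : G) : a * b = 1 ↔ a = b := by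
  constructor
  · intro h
    calc a = a * (b * b) := by rw [hsq, mul_one]
    _ = (a * b) * b := by rw [mul_assoc]
    _ = b := by rw [h, one_mul]
  · rintro rfl; exact hsq a

lemma rearr (hcomm : ∀ a b : G, a * b = b * a) (g h u v : G) : (g * u) * (h * v) = (g * h) * (u * v) := by
  rw [mul_assoc, mul_assoc]
  congr 1
  rw [← mul_assoc, hcomm u h, mul_assoc]

def Ypt (x : XG G) (p q : G) : XG G := mkX (x.1 0 * p) (x.1 1 * q)

lemma Ypt_0 (x : XG G) (p q : G) : (Ypt x p q).1 0 = x.1 0 * p := rfl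
lemma Ypt_1 (x : XG G) (p q : G) : (Ypt x p q).1 1 = x.1 1 * q := rfl
lemma Ypt_2 (hcomm : ∀ a b : G, a * b = b * a) (x : XG G) (p q : G) : (Ypt x p q).1 2 = (x.1 0 * x.1 1) * (p * q) := by
  show (x.1 0 * p) * (x.1 1 * q) = _
  exact rearr hcomm _ _ _ _

lemma rel4_x_Ypt (hcomm : ∀ a b : G, a * b = b * a) (hsq : ∀ a : G, a * a = 1) (x : XG G) (p q : G) (hp : p ≠ 1) (hq : q ≠ 1) (hpq : p ≠ q) :
    rel 4 x (Ypt x p q) := by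
  rw [rel4_iff]
  intro d
  fin_cases d
  · show x.1 0 ≠ x.1 0 * p
    simp only [ne_eq, left_eq_mul]; exact hp
  · show x.1 1 ≠ x.1 1 * q
    simp only [ne_eq, left_eq_mul]; exact hq
  · show x.1 2 ≠ (Ypt x p q).1 2
    rw [Ypt_2 hcomm, ← x.2]
    intro e
    have h1 : (x.1 0 * x.1 1) * 1 = (x.1 0 * x.1 1) * (p * q) := by
      rw [mul_one]; exact e
    exact hpq ((myMulEqOne hsq p q).1 (mul_left_cancel h1).symm)

lemma rel4_Ypt_Ypt (hcomm : ∀ a b : G, a * b = b * a) (x : XG G) (p q r s : G) (hpr : p ≠ r) (hqs : q ≠ s)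
    (hps : p * q ≠ r * s) : rel 4 (Ypt x p q) (Ypt x r s) := by
  rw [rel4_iff]
  intro d
  fin_cases d
  · show x.1 0 * p ≠ x.1 0 * r
    exact fun e => hpr (mul_left_cancel e)
  · show x.1 1 * q ≠ x.1 1 * s
    exact fun e => hqs (mul_left_cancel e)
  · show (Ypt x p q).1 2 ≠ (Ypt x r s).1 2
    rw [Ypt_2 hcomm, Ypt_2 hcomm]
    exact fun e => hps (mul_left_cancel e)

end Aux5
section Aux6

set_option linter.unusedSectionVars false

variable {F : Type} [Field F] {G : Type} [Group G] [Fintype G] [DecidableEq G]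

lemma myL_eval (hcomm : ∀ a b : G, a * b = b * a) (hsq : ∀ a : G, a * a = 1)
    (x : XG G) (c₁ c₂ c₃ c₄ c₅ c₆ : F) (L : Matrix (XG G) (XG G) F)
    (hL : L =
      c₁ • (DualE F x 4 * Adj F 1 * DualE F x 2 * Adj F 3 * DualE F x 4) +
      c₂ • (DualE F x 4 * Adj F 1 * DualE F x 3 * Adj F 2 * DualE F x 4) +
      c₃ • (DualE F x 4 * Adj F 2 * DualE F x 1 * Adj F 3 * DualE F x 4) +
      c₄ • (DualE F x 4 * Adj F 2 * DualE F x 3 * Adj F 1 * DualE F x 4) +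
      c₅ • (DualE F x 4 * Adj F 3 * DualE F x 1 * Adj F 2 * DualE F x 4) +
      c₆ • (DualE F x 4 * Adj F 3 * DualE F x 2 * Adj F 1 * DualE F x 4))
    (p q r s : G) (hp : p ≠ 1) (hq : q ≠ 1) (hpq : p ≠ q)
    (hr : r ≠ 1) (hs : s ≠ 1) (hrs : r ≠ s) :
    L (Ypt x p q) (Ypt x r s) =
      c₁ * (if p = r * s then 1 else 0)
      + c₂ * (if p = s then 1 else 0)
      + c₃ * (if q = r * s then 1 else 0)
      + c₄ * (if q = r then 1 else 0)
      + c₅ * (if s = p * q then 1 else 0)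
      + c₆ * (if r = p * q then 1 else 0) := by
  have h4y := rel4_x_Ypt hcomm hsq x p q hp hq hpq
  have h4z := rel4_x_Ypt hcomm hsq x r s hr hs hrs
  rw [myL_apply x c₁ c₂ c₃ c₄ c₅ c₆ L hL _ _ h4y h4z]
  have e0 := Ypt_0 x p q
  have e1 := Ypt_1 x p q
  have e2 := Ypt_2 hcomm x p q
  have f0 := Ypt_0 x r s
  have f1 := Ypt_1 x r s
  have f2 := Ypt_2 hcomm x r s
  rw [e0, e1, e2, f0, f1, f2, ← x.2]
  have shift : ∀ g u h : G, (g * u) * h = (g * h) * u := by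
    intro g u h
    rw [mul_assoc, hcomm u h, ← mul_assoc]
  have k1 : ((x.1 0 * p) * x.1 1 = (x.1 0 * x.1 1) * (r * s)) ↔ (p = r * s) := by
    rw [shift, mul_right_inj]
  have k2 : ((x.1 0 * p) * (x.1 1 * s) = x.1 0 * x.1 1) ↔ (p = s) := by
    rw [rearr hcomm, mul_eq_left, myMulEqOne hsq]
  have k3 : (x.1 0 * (x.1 1 * q) = (x.1 0 * x.1 1) * (r * s)) ↔ (q = r * s) := by
    rw [← mul_assoc, mul_right_inj]
  have k4 : ((x.1 0 * r) * (x.1 1 * q) = x.1 0 * x.1 1) ↔ (q = r) := by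
    rw [rearr hcomm, mul_eq_left, myMulEqOne hsq, eq_comm]
  have k5 : (x.1 0 * (x.1 1 * s) = (x.1 0 * x.1 1) * (p * q)) ↔ (s = p * q) := by
    rw [← mul_assoc, mul_right_inj]
  have k6 : ((x.1 0 * r) * x.1 1 = (x.1 0 * x.1 1) * (p * q)) ↔ (r = p * q) := by
    rw [shift, mul_right_inj]
  simp only [k1, k2, k3, k4, k5, k6]

end Aux6
theorem stmt6 (F : Type) [Field F] (G : Type) [Group G] [Fintype G] [DecidableEq G]
    (helem : ∀ a : G, a ^ 2 = 1) (hcard : 4 < Fintype.card G)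
    (x : XG G) (c₁ c₂ c₃ c₄ c₅ c₆ : F)
    (hc : ¬ (c₁ = 0 ∧ c₂ = 0 ∧ c₃ = 0 ∧ c₄ = 0 ∧ c₅ = 0 ∧ c₆ = 0))
    (L : Matrix (XG G) (XG G) F)
    (hL : L =
      c₁ • (DualE F x 4 * Adj F 1 * DualE F x 2 * Adj F 3 * DualE F x 4) +
      c₂ • (DualE F x 4 * Adj F 1 * DualE F x 3 * Adj F 2 * DualE F x 4) +
      c₃ • (DualE F x 4 * Adj F 2 * DualE F x 1 * Adj F 3 * DualE F x 4) +
      c₄ • (DualE F x 4 * Adj F 2 * DualE F x 3 * Adj F 1 * DualE F x 4) +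
      c₅ • (DualE F x 4 * Adj F 3 * DualE F x 1 * Adj F 2 * DualE F x 4) +
      c₆ • (DualE F x 4 * Adj F 3 * DualE F x 2 * Adj F 1 * DualE F x 4))
    (hmem : L ∈ Submodule.span F (genSet F G x)) :
    ∃ c : F, c ≠ 0 ∧ L = c • (DualE F x 4 * Adj F 4 * DualE F x 4) := by
  have hsq : ∀ g : G, g * g = 1 := fun g => by rw [← pow_two]; exact helem g
  have hinv : ∀ g : G, g⁻¹ = g := fun g => inv_eq_of_mul_eq_one_right (hsq g)
  have hcomm : ∀ a b : G, a * b = b * a := by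
    intro a b
    calc a * b = (a * b)⁻¹ := (hinv _).symm
      _ = b⁻¹ * a⁻¹ := mul_inv_rev a b
      _ = b * a := by rw [hinv, hinv]
  have hsq2 : ∀ u v : G, u * (u * v) = v := fun u v => by rw [← mul_assoc, hsq, one_mul]
  letI : CommGroup G := { (inferInstance : Group G) with mul_comm := hcomm }
  -- elements
  have exmem : ∀ s : Finset G, s.card < Fintype.card G → ∃ g, g ∉ s := by
    intro s hs
    by_contra hcon
    push_neg at hcon
    have hsub : Finset.univ ⊆ s := fun g _ => hcon g
    have := Finset.card_le_card hsub
    rw [Finset.card_univ] at this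
    omega
  obtain ⟨a, ha'⟩ := exmem {1} (by rw [Finset.card_singleton]; omega)
  rw [Finset.mem_singleton] at ha'
  have ha : a ≠ 1 := ha'
  obtain ⟨b, hb'⟩ := exmem {1, a} (by
    refine lt_of_le_of_lt (Finset.card_insert_le _ _) ?_
    rw [Finset.card_singleton]; omega)
  simp only [Finset.mem_insert, Finset.mem_singleton, not_or] at hb'
  obtain ⟨hb1, hba⟩ := hb'
  have hc4 : ({1, a, b, a * b} : Finset G).card ≤ 4 := by
    refine le_trans (Finset.card_insert_le _ _) ?_
    refine le_trans (Nat.add_le_add_right (Finset.card_insert_le _ _) 1) ?_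
    refine le_trans (Nat.add_le_add_right (Nat.add_le_add_right (Finset.card_insert_le _ _) 1) 1) ?_
    simp
  obtain ⟨e, he'⟩ := exmem {1, a, b, a * b} (lt_of_le_of_lt hc4 hcard)
  simp only [Finset.mem_insert, Finset.mem_singleton, not_or] at he'
  obtain ⟨he1, hea, heb, heab⟩ := he'
  -- nonone facts
  have nab : a * b ≠ 1 := fun h => hba ((myMulEqOne hsq a b).1 h).symm
  have nae : a * e ≠ 1 := fun h => hea ((myMulEqOne hsq a e).1 h).symm
  have nbe : b * e ≠ 1 := fun h => heb ((myMulEqOne hsq b e).1 h).symm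
  have nabe : a * (b * e) ≠ 1 := by
    intro h
    apply heab
    have h2 : e * (a * b) = a * (b * e) := by
      simp [mul_assoc, mul_comm, mul_left_comm]
    exact (myMulEqOne hsq e (a * b)).1 (h2.trans h)
  have wne : ∀ u v w : G, w ≠ 1 → u * v = w → u ≠ v := by
    intro u v w hw hred huv
    exact hw (by rw [← hred, huv, hsq])
  have hev := myL_eval hcomm hsq x c₁ c₂ c₃ c₄ c₅ c₆ L hL
  -- witness values
  have hW1 : L (Ypt x (a * b) e) (Ypt x a b) = c₁ := by
    rw [hev (a * b) e a b nab he1 (Ne.symm heab) ha hb1 (Ne.symm hba)]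
    rw [if_pos rfl,
      if_neg (wne (a * b) b a ha (by simp [mul_assoc, mul_comm, mul_left_comm, hsq, hsq2])),
      if_neg heab, if_neg hea,
      if_neg (wne b ((a * b) * e) (a * e) nae
        (by simp [mul_assoc, mul_comm, mul_left_comm, hsq, hsq2])),
      if_neg (wne a ((a * b) * e) (b * e) nbe
        (by simp [mul_assoc, mul_comm, mul_left_comm, hsq, hsq2]))]
    ring
  have hW2 : L (Ypt x a b) (Ypt x e a) = c₂ := by
    rw [hev a b e a ha hb1 (Ne.symm hba) he1 ha hea]
    rw [if_neg (wne a (e * a) e he1 (by simp [mul_assoc, mul_comm, mul_left_comm, hsq, hsq2])),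
      if_pos rfl,
      if_neg (wne b (e * a) (a * (b * e)) nabe
        (by simp [mul_assoc, mul_comm, mul_left_comm, hsq, hsq2])),
      if_neg (Ne.symm heb),
      if_neg (wne a (a * b) b hb1 (by simp [mul_assoc, mul_comm, mul_left_comm, hsq, hsq2])),
      if_neg heab]
    ring
  have hW3 : L (Ypt x e (a * b)) (Ypt x a b) = c₃ := by
    rw [hev e (a * b) a b he1 nab heab ha hb1 (Ne.symm hba)]
    rw [if_neg heab, if_neg heb, if_pos rfl,
      if_neg (wne (a * b) a b hb1 (by simp [mul_assoc, mul_comm, mul_left_comm, hsq, hsq2])),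
      if_neg (wne b (e * (a * b)) (a * e) nae
        (by simp [mul_assoc, mul_comm, mul_left_comm, hsq, hsq2])),
      if_neg (wne a (e * (a * b)) (b * e) nbe
        (by simp [mul_assoc, mul_comm, mul_left_comm, hsq, hsq2]))]
    ring
  have hW4 : L (Ypt x a b) (Ypt x b e) = c₄ := by
    rw [hev a b b e ha hb1 (Ne.symm hba) hb1 he1 (Ne.symm heb)]
    rw [if_neg (wne a (b * e) (a * (b * e)) nabe
        (by simp [mul_assoc, mul_comm, mul_left_comm, hsq, hsq2])),
      if_neg (Ne.symm hea),
      if_neg (wne b (b * e) e he1 (by simp [mul_assoc, mul_comm, mul_left_comm, hsq, hsq2])),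
      if_pos rfl, if_neg heab,
      if_neg (wne b (a * b) a ha (by simp [mul_assoc, mul_comm, mul_left_comm, hsq, hsq2]))]
    ring
  have hW5 : L (Ypt x a b) (Ypt x e (a * b)) = c₅ := by
    rw [hev a b e (a * b) ha hb1 (Ne.symm hba) he1 nab heab]
    rw [if_neg (wne a (e * (a * b)) (b * e) nbe
        (by simp [mul_assoc, mul_comm, mul_left_comm, hsq, hsq2])),
      if_neg (wne a (a * b) b hb1 (by simp [mul_assoc, mul_comm, mul_left_comm, hsq, hsq2])),
      if_neg (wne b (e * (a * b)) (a * e) nae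
        (by simp [mul_assoc, mul_comm, mul_left_comm, hsq, hsq2])),
      if_neg (Ne.symm heb), if_pos rfl, if_neg heab]
    ring
  have hW6 : L (Ypt x a b) (Ypt x (a * b) e) = c₆ := by
    rw [hev a b (a * b) e ha hb1 (Ne.symm hba) nab he1 (Ne.symm heab)]
    rw [if_neg (wne a ((a * b) * e) (b * e) nbe
        (by simp [mul_assoc, mul_comm, mul_left_comm, hsq, hsq2])),
      if_neg (Ne.symm hea),
      if_neg (wne b ((a * b) * e) (a * e) nae
        (by simp [mul_assoc, mul_comm, mul_left_comm, hsq, hsq2])),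
      if_neg (wne b (a * b) a ha (by simp [mul_assoc, mul_comm, mul_left_comm, hsq, hsq2])),
      if_neg heab, if_pos rfl]
    ring
  have hW7 : L (Ypt x a b) (Ypt x (a * b) a) = c₂ + c₃ + c₆ := by
    rw [hev a b (a * b) a ha hb1 (Ne.symm hba) nab ha
      (wne (a * b) a b hb1 (by simp [mul_assoc, mul_comm, mul_left_comm, hsq, hsq2]))]
    rw [if_neg (wne a ((a * b) * a) (a * b) nab
        (by simp [mul_assoc, mul_comm, mul_left_comm, hsq, hsq2])),
      if_pos rfl,
      if_pos (show b = (a * b) * a by simp [mul_assoc, mul_comm, mul_left_comm, hsq, hsq2]),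
      if_neg (wne b (a * b) a ha (by simp [mul_assoc, mul_comm, mul_left_comm, hsq, hsq2])),
      if_neg (wne a (a * b) b hb1 (by simp [mul_assoc, mul_comm, mul_left_comm, hsq, hsq2])),
      if_pos rfl]
    ring
  -- rel4 facts for witnesses
  have R4ab : rel 4 x (Ypt x a b) := rel4_x_Ypt hcomm hsq x a b ha hb1 (Ne.symm hba)
  have R4ea : rel 4 x (Ypt x e a) := rel4_x_Ypt hcomm hsq x e a he1 ha hea
  have R4be : rel 4 x (Ypt x b e) := rel4_x_Ypt hcomm hsq x b e hb1 he1 (Ne.symm heb)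
  have R4eab : rel 4 x (Ypt x e (a * b)) := rel4_x_Ypt hcomm hsq x e (a * b) he1 nab heab
  have R4abe : rel 4 x (Ypt x (a * b) e) :=
    rel4_x_Ypt hcomm hsq x (a * b) e nab he1 (Ne.symm heab)
  have R4aba : rel 4 x (Ypt x (a * b) a) := rel4_x_Ypt hcomm hsq x (a * b) a nab ha
    (wne (a * b) a b hb1 (by simp [mul_assoc, mul_comm, mul_left_comm, hsq, hsq2]))
  have M2 : rel 4 (Ypt x a b) (Ypt x e a) := rel4_Ypt_Ypt hcomm x a b e a
    (Ne.symm hea) hba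
    (wne (a * b) (e * a) (b * e) nbe (by simp [mul_assoc, mul_comm, mul_left_comm, hsq, hsq2]))
  have M1 : rel 4 (Ypt x (a * b) e) (Ypt x a b) := rel4_Ypt_Ypt hcomm x (a * b) e a b
    (wne (a * b) a b hb1 (by simp [mul_assoc, mul_comm, mul_left_comm, hsq, hsq2])) heb
    (wne ((a * b) * e) (a * b) e he1 (by simp [mul_assoc, mul_comm, mul_left_comm, hsq, hsq2]))
  have M3 : rel 4 (Ypt x e (a * b)) (Ypt x a b) := rel4_Ypt_Ypt hcomm x e (a * b) a b
    hea (wne (a * b) b a ha (by simp [mul_assoc, mul_comm, mul_left_comm, hsq, hsq2]))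
    (wne (e * (a * b)) (a * b) e he1 (by simp [mul_assoc, mul_comm, mul_left_comm, hsq, hsq2]))
  have M4 : rel 4 (Ypt x a b) (Ypt x b e) := rel4_Ypt_Ypt hcomm x a b b e
    (Ne.symm hba) (Ne.symm heb)
    (wne (a * b) (b * e) (a * e) nae (by simp [mul_assoc, mul_comm, mul_left_comm, hsq, hsq2]))
  have M5 : rel 4 (Ypt x a b) (Ypt x e (a * b)) := rel4_Ypt_Ypt hcomm x a b e (a * b)
    (Ne.symm hea) (wne b (a * b) a ha (by simp [mul_assoc, mul_comm, mul_left_comm, hsq, hsq2]))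
    (wne (a * b) (e * (a * b)) e he1 (by simp [mul_assoc, mul_comm, mul_left_comm, hsq, hsq2]))
  have M6 : rel 4 (Ypt x a b) (Ypt x (a * b) e) := rel4_Ypt_Ypt hcomm x a b (a * b) e
    (wne a (a * b) b hb1 (by simp [mul_assoc, mul_comm, mul_left_comm, hsq, hsq2]))
    (Ne.symm heb)
    (wne (a * b) ((a * b) * e) e he1 (by simp [mul_assoc, mul_comm, mul_left_comm, hsq, hsq2]))
  have M7 : rel 4 (Ypt x a b) (Ypt x (a * b) a) := rel4_Ypt_Ypt hcomm x a b (a * b) a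
    (wne a (a * b) b hb1 (by simp [mul_assoc, mul_comm, mul_left_comm, hsq, hsq2])) hba
    (wne (a * b) ((a * b) * a) a ha (by simp [mul_assoc, mul_comm, mul_left_comm, hsq, hsq2]))
  -- coefficient relations
  have E1 : c₁ = c₂ := by
    rw [← hW1, ← hW2]
    exact const44 x L hmem _ _ _ _ R4abe M1 R4ab R4ab M2 R4ea
  have E3 : c₃ = c₂ := by
    rw [← hW3, ← hW2]
    exact const44 x L hmem _ _ _ _ R4eab M3 R4ab R4ab M2 R4ea
  have E4 : c₄ = c₂ := by
    rw [← hW4, ← hW2]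
    exact const44 x L hmem _ _ _ _ R4ab M4 R4be R4ab M2 R4ea
  have E5 : c₅ = c₂ := by
    rw [← hW5, ← hW2]
    exact const44 x L hmem _ _ _ _ R4ab M5 R4eab R4ab M2 R4ea
  have E6 : c₆ = c₂ := by
    rw [← hW6, ← hW2]
    exact const44 x L hmem _ _ _ _ R4ab M6 R4abe R4ab M2 R4ea
  have E7 : c₂ + c₃ + c₆ = c₂ := by
    rw [← hW7, ← hW2]
    exact const44 x L hmem _ _ _ _ R4ab M7 R4aba R4ab M2 R4ea
  have h2k : c₂ + c₂ = 0 := by linear_combination E7 - E3 - E6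
  have hk : c₂ ≠ 0 := by
    intro h0
    exact hc ⟨E1.trans h0, h0, E3.trans h0, E4.trans h0, E5.trans h0, E6.trans h0⟩
  refine ⟨c₂, hk, ?_⟩
  ext y z
  rw [Matrix.smul_apply, triple_apply, smul_eq_mul]
  by_cases h4y : rel 4 x y
  · by_cases h4z : rel 4 x z
    · have h4y' := (rel4_iff x y).1 h4y
      have h4z' := (rel4_iff x z).1 h4z
      rcases rel_cases y z with hyz | hyz | hyz | hyz | hyz
      · -- cell 0
        subst hyz
        rw [myL_apply x c₁ c₂ c₃ c₄ c₅ c₆ L hL y y h4y h4z]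
        have K1 : ¬(y.1 0 * x.1 1 = y.1 2) := fun ev =>
          h4y' 1 (mul_left_cancel (ev.trans y.2.symm))
        have K2 : ¬(y.1 0 * y.1 1 = x.1 2) := fun ev => h4y' 2 (ev.symm.trans y.2)
        have K3 : ¬(x.1 0 * y.1 1 = y.1 2) := fun ev =>
          h4y' 0 (mul_right_cancel (ev.trans y.2.symm))
        have hRHS : ¬(rel 4 x y ∧ rel 4 y y ∧ rel 4 x y) :=
          fun hcon => ((rel4_iff y y).1 hcon.2.1) 0 rfl
        rw [if_neg K1, if_neg K2, if_neg K3, if_neg hRHS]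
        ring
      · -- cell 1
        obtain ⟨hne, h00⟩ := hyz
        rw [myL_apply x c₁ c₂ c₃ c₄ c₅ c₆ L hL y z h4y h4z]
        have K1 : ¬(y.1 0 * x.1 1 = z.1 2) := by
          intro ev
          have e2 : y.1 0 * x.1 1 = y.1 0 * z.1 1 := by rw [ev, ← z.2, ← h00]
          exact h4z' 1 (mul_left_cancel e2)
        have K2 : ¬(y.1 0 * z.1 1 = x.1 2) := by
          intro ev
          have e2 : z.1 2 = x.1 2 := by rw [← z.2, ← h00, ev]
          exact h4z' 2 e2.symm
        have K4 : ¬(z.1 0 * y.1 1 = x.1 2) := by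
          intro ev
          have e2 : y.1 2 = x.1 2 := by rw [← y.2, h00, ev]
          exact h4y' 2 e2.symm
        have K6 : ¬(z.1 0 * x.1 1 = y.1 2) := by
          intro ev
          have e2 : z.1 0 * x.1 1 = z.1 0 * y.1 1 := by rw [ev, ← y.2, h00]
          exact h4y' 1 (mul_left_cancel e2)
        have iff35 : (x.1 0 * y.1 1 = z.1 2) ↔ (x.1 0 * z.1 1 = y.1 2) := by
          rw [← z.2, ← y.2, ← h00]
          constructor
          · intro ev
            calc x.1 0 * z.1 1 = (x.1 0 * y.1 1) * (y.1 1 * z.1 1) := by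
                  simp [mul_assoc, mul_comm, mul_left_comm, hsq, hsq2]
              _ = (y.1 0 * z.1 1) * (y.1 1 * z.1 1) := by rw [ev]
              _ = y.1 0 * y.1 1 := by simp [mul_assoc, mul_comm, mul_left_comm, hsq, hsq2]
          · intro ev
            calc x.1 0 * y.1 1 = (x.1 0 * z.1 1) * (z.1 1 * y.1 1) := by
                  simp [mul_assoc, mul_comm, mul_left_comm, hsq, hsq2]
              _ = (y.1 0 * y.1 1) * (z.1 1 * y.1 1) := by rw [ev]
              _ = y.1 0 * z.1 1 := by simp [mul_assoc, mul_comm, mul_left_comm, hsq, hsq2]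
        have e35 : (if x.1 0 * z.1 1 = y.1 2 then (1 : F) else 0)
            = (if x.1 0 * y.1 1 = z.1 2 then (1 : F) else 0) := by
          by_cases hcnd : x.1 0 * y.1 1 = z.1 2
          · rw [if_pos (iff35.1 hcnd), if_pos hcnd]
          · rw [if_neg (fun hcc => hcnd (iff35.2 hcc)), if_neg hcnd]
        have hRHS : ¬(rel 4 x y ∧ rel 4 y z ∧ rel 4 x z) :=
          fun hcon => ((rel4_iff y z).1 hcon.2.1) 0 h00
        rw [if_neg K1, if_neg K2, if_neg K4, e35, if_neg K6, if_neg hRHS]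
        linear_combination (if x.1 0 * y.1 1 = z.1 2 then (1 : F) else 0) * (h2k + E3 + E5)
      · -- cell 2
        obtain ⟨hne, h11⟩ := hyz
        rw [myL_apply x c₁ c₂ c₃ c₄ c₅ c₆ L hL y z h4y h4z]
        have K2 : ¬(y.1 0 * z.1 1 = x.1 2) := by
          intro ev
          have e2 : y.1 2 = x.1 2 := by rw [← y.2, h11, ev]
          exact h4y' 2 e2.symm
        have K3 : ¬(x.1 0 * y.1 1 = z.1 2) := by
          intro ev
          have e2 : x.1 0 * y.1 1 = z.1 0 * y.1 1 := by rw [ev, ← z.2, ← h11]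
          exact h4z' 0 (mul_right_cancel e2)
        have K4 : ¬(z.1 0 * y.1 1 = x.1 2) := by
          intro ev
          have e2 : z.1 2 = x.1 2 := by rw [← z.2, ← h11, ev]
          exact h4z' 2 e2.symm
        have K5 : ¬(x.1 0 * z.1 1 = y.1 2) := by
          intro ev
          have e2 : x.1 0 * z.1 1 = y.1 0 * z.1 1 := by rw [ev, ← y.2, h11]
          exact h4y' 0 (mul_right_cancel e2)
        have iff16 : (y.1 0 * x.1 1 = z.1 2) ↔ (z.1 0 * x.1 1 = y.1 2) := by
          rw [← z.2, ← y.2, ← h11]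
          constructor
          · intro ev
            calc z.1 0 * x.1 1 = (y.1 0 * x.1 1) * (y.1 0 * z.1 0) := by
                  simp [mul_assoc, mul_comm, mul_left_comm, hsq, hsq2]
              _ = (z.1 0 * y.1 1) * (y.1 0 * z.1 0) := by rw [ev]
              _ = y.1 0 * y.1 1 := by simp [mul_assoc, mul_comm, mul_left_comm, hsq, hsq2]
          · intro ev
            calc y.1 0 * x.1 1 = (z.1 0 * x.1 1) * (z.1 0 * y.1 0) := by
                  simp [mul_assoc, mul_comm, mul_left_comm, hsq, hsq2]
              _ = (y.1 0 * y.1 1) * (z.1 0 * y.1 0) := by rw [ev]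
              _ = z.1 0 * y.1 1 := by simp [mul_assoc, mul_comm, mul_left_comm, hsq, hsq2]
        have e16 : (if y.1 0 * x.1 1 = z.1 2 then (1 : F) else 0)
            = (if z.1 0 * x.1 1 = y.1 2 then (1 : F) else 0) := by
          by_cases hcnd : z.1 0 * x.1 1 = y.1 2
          · rw [if_pos (iff16.2 hcnd), if_pos hcnd]
          · rw [if_neg (fun hcc => hcnd (iff16.1 hcc)), if_neg hcnd]
        have hRHS : ¬(rel 4 x y ∧ rel 4 y z ∧ rel 4 x z) :=
          fun hcon => ((rel4_iff y z).1 hcon.2.1) 1 h11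
        rw [e16, if_neg K2, if_neg K3, if_neg K4, if_neg K5, if_neg hRHS]
        linear_combination (if z.1 0 * x.1 1 = y.1 2 then (1 : F) else 0) * (h2k + E1 + E6)
      · -- cell 3
        obtain ⟨hne, h22⟩ := hyz
        rw [myL_apply x c₁ c₂ c₃ c₄ c₅ c₆ L hL y z h4y h4z]
        have K1 : ¬(y.1 0 * x.1 1 = z.1 2) := by
          intro ev
          have e2 : y.1 0 * x.1 1 = y.1 0 * y.1 1 := by rw [ev, ← h22, ← y.2]
          exact h4y' 1 (mul_left_cancel e2)
        have K3 : ¬(x.1 0 * y.1 1 = z.1 2) := by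
          intro ev
          have e2 : x.1 0 * y.1 1 = y.1 0 * y.1 1 := by rw [ev, ← h22, ← y.2]
          exact h4y' 0 (mul_right_cancel e2)
        have K5 : ¬(x.1 0 * z.1 1 = y.1 2) := by
          intro ev
          have e2 : x.1 0 * z.1 1 = z.1 0 * z.1 1 := by rw [ev, h22, ← z.2]
          exact h4z' 0 (mul_right_cancel e2)
        have K6 : ¬(z.1 0 * x.1 1 = y.1 2) := by
          intro ev
          have e2 : z.1 0 * x.1 1 = z.1 0 * z.1 1 := by rw [ev, h22, ← z.2]
          exact h4z' 1 (mul_left_cancel e2)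
        have hprod : y.1 0 * y.1 1 = z.1 0 * z.1 1 := by rw [y.2, h22, ← z.2]
        have eq24 : y.1 0 * z.1 1 = z.1 0 * y.1 1 := by
          calc y.1 0 * z.1 1 = (y.1 0 * y.1 1) * (y.1 1 * z.1 1) := by
                simp [mul_assoc, mul_comm, mul_left_comm, hsq, hsq2]
            _ = (z.1 0 * z.1 1) * (y.1 1 * z.1 1) := by rw [hprod]
            _ = z.1 0 * y.1 1 := by simp [mul_assoc, mul_comm, mul_left_comm, hsq, hsq2]
        have hRHS : ¬(rel 4 x y ∧ rel 4 y z ∧ rel 4 x z) :=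
          fun hcon => ((rel4_iff y z).1 hcon.2.1) 2 h22
        rw [if_neg K1, if_neg K3, if_neg K5, if_neg K6, eq24, if_neg hRHS]
        linear_combination (if z.1 0 * y.1 1 = x.1 2 then (1 : F) else 0) * (h2k + E4)
      · -- cell 4
        rw [if_pos ⟨h4y, (rel4_iff y z).2 hyz, h4z⟩, mul_one, ← hW2]
        exact const44 x L hmem y z _ _ h4y ((rel4_iff y z).2 hyz) h4z R4ab M2 R4ea
    · have hRHS : ¬(rel 4 x y ∧ rel 4 y z ∧ rel 4 x z) := fun hcon => h4z hcon.2.2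
      rw [myL_zero x c₁ c₂ c₃ c₄ c₅ c₆ L hL y z (fun hcon => h4z hcon.2), if_neg hRHS]
      ring
  · have hRHS : ¬(rel 4 x y ∧ rel 4 y z ∧ rel 4 x z) := fun hcon => h4y hcon.1
    rw [myL_zero x c₁ c₂ c₃ c₄ c₅ c₆ L hL y z (fun hcon => h4y hcon.1), if_neg hRHS]
    ring
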